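/- Let F be a lift of a conservative twist map with generating function S, and suppose the graph of a continuous ψ : 𝕋 → ℝ is F-invariant. Set c = ∫₀¹ψ(t)dt, η(θ) = ∫₀^θ ψ(t)dt − cθ (a ℤ-periodic C¹ function), and W(θ,Θ) = S(θ,Θ) + c(θ−Θ) + η(θ) − η(Θ). Then W(θ+1, Θ+1) = W(θ,Θ), W is coercive in |Θ−θ|, and the critical points of W are exactly the pairs (θ, π∘F(θ, ψ(θ))); the global minimum of W is attained precisely on this set. Consequently every orbit on the graph of ψ is minimizing for the action Σ S(θ_{k−1},θ_k) with fixed endpoints. -/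

import Mathlib

/-- `c = ∫₀¹ ψ`. -/
noncomputable def cconst (ψ : ℝ → ℝ) : ℝ := ∫ t in (0 : ℝ)..1, ψ t

/-- `η(θ) = ∫₀^θ ψ − cθ`. -/
noncomputable def etaFn (ψ : ℝ → ℝ) (θ : ℝ) : ℝ :=
  (∫ t in (0 : ℝ)..θ, ψ t) - cconst ψ * θ

/-- `W(θ,Θ) = S(θ,Θ) + c(θ−Θ) + η(θ) − η(Θ)`. -/
noncomputable def WFn (S : ℝ × ℝ → ℝ) (ψ : ℝ → ℝ) (θ Θ : ℝ) : ℝ :=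
  S (θ, Θ) + cconst ψ * (θ - Θ) + etaFn ψ θ - etaFn ψ Θ

/-!
Write `g θ` for the first coordinate of `F (θ, ψ θ)`. Invariance of the graph says
`∂₁S(θ, gθ) = -ψ θ` and `∂₂S(θ, gθ) = ψ (gθ)`, i.e. `(θ, gθ)` is a critical point of `W`.
The twist condition (with the symmetry of mixed partials) makes `∂₁S(θ, ·)` and `∂₂S(·, Θ)`
decrease at rate `ε`. The first gives uniqueness of the critical point and continuity of `g`;
as `g` stays at bounded distance from the identity it is an increasing bijection of `ℝ`.
Hence `∂₂W(θ, u) = ∂₂S(θ, u) - ∂₂S(g⁻¹u, u)` has the sign of `u - gθ`, so `gθ` is the strict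
minimiser of `W(θ, ·)`. The minimal value `m θ = W(θ, gθ)` is constant by the envelope
argument: `m θ' - m θ` is squeezed between `W(θ', gθ') - W(θ, gθ')` and
`W(θ', gθ) - W(θ, gθ)`, so `m' θ = ∂₁W(θ, gθ) = 0`. Finally `S(x, y) = W(x, y) + P y - P x`
with `P x = c x + η x`, so along segments with fixed endpoints the action differs from the sum
of `W` by a constant, and orbits make every term of that sum minimal.
-/

open Set Filter

namespace TwistMap

section Slices

variable {E : Type*} [NormedAddCommGroup E] [NormedSpace ℝ E]
  {f : ℝ × ℝ → E} {f' : ℝ × ℝ →L[ℝ] E} {θ Θ : ℝ}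

theorem _root_.HasFDerivAt.hasDerivAt_slice_fst (hf : HasFDerivAt f f' (θ, Θ)) :
    HasDerivAt (fun t => f (t, Θ)) (f' (1, 0)) θ :=
  hf.comp_hasDerivAt θ ((hasDerivAt_id θ).prodMk (hasDerivAt_const θ Θ))

theorem _root_.HasFDerivAt.hasDerivAt_slice_snd (hf : HasFDerivAt f f' (θ, Θ)) :
    HasDerivAt (fun u => f (θ, u)) (f' (0, 1)) Θ :=
  hf.comp_hasDerivAt Θ ((hasDerivAt_const Θ θ).prodMk (hasDerivAt_id Θ))

end Slices

theorem exists_abs_le_of_periodic {f : ℝ → ℝ} (hf : Continuous f)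
    (hp : ∀ t, f (t + 1) = f t) : ∃ M, ∀ t, |f t| ≤ M := by
  obtain ⟨M, hM⟩ := isBounded_iff_forall_norm_le.mp
    (Function.Periodic.isBounded_of_continuous hp one_ne_zero hf)
  exact ⟨M, fun t => hM _ (mem_range_self t)⟩

section Rate

variable {f : ℝ → ℝ} {ε : ℝ}

theorem strictAnti_of_sub_le (hε : 0 < ε)
    (hf : ∀ a b, a ≤ b → f b - f a ≤ -ε * (b - a)) : StrictAnti f :=
  fun a b hab => by nlinarith [hf a b hab.le]

theorem mul_abs_sub_le_of_sub_le (hf : ∀ a b, a ≤ b → f b - f a ≤ -ε * (b - a)) (a b : ℝ) :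
    ε * |b - a| ≤ |f b - f a| := by
  rcases le_total a b with hab | hab
  · have := hf a b hab
    rw [abs_of_nonneg (sub_nonneg.2 hab)]
    exact le_trans (by linarith) (neg_le_abs _)
  · have := hf b a hab
    rw [abs_sub_comm, abs_of_nonneg (sub_nonneg.2 hab), abs_sub_comm]
    exact le_trans (by linarith) (neg_le_abs _)

end Rate

theorem continuous_of_strictAnti_of_apply_eq {φ : ℝ → ℝ → ℝ} {c g : ℝ → ℝ}
    (hanti : ∀ t, StrictAnti (φ t)) (hφ : ∀ Θ, Continuous fun t => φ t Θ) (hc : Continuous c)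
    (hg : ∀ t, φ t (g t) = c t) : Continuous g := by
  refine continuous_iff_continuousAt.2 fun θ => tendsto_order.2 ⟨fun a ha => ?_, fun b hb => ?_⟩
  · have hlt : c θ < φ θ a := hg θ ▸ hanti θ ha
    filter_upwards [(hc.tendsto θ).eventually_lt ((hφ a).tendsto θ) hlt] with t ht
    exact (hanti t).lt_iff_gt.1 (hg t ▸ ht)
  · have hlt : φ θ b < c θ := hg θ ▸ hanti θ hb
    filter_upwards [((hφ b).tendsto θ).eventually_lt (hc.tendsto θ) hlt] with t ht
    exact (hanti t).lt_iff_gt.1 (hg t ▸ ht)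

section BoundedDisplacement

variable {g : ℝ → ℝ} {C : ℝ}

theorem tendsto_atTop_of_abs_sub_le (hC : ∀ θ, |g θ - θ| ≤ C) : Tendsto g atTop atTop :=
  tendsto_atTop_mono (fun θ => by rw [id]; linarith [(abs_le.1 (hC θ)).1])
    (tendsto_atTop_add_const_right _ (-C) tendsto_id)

theorem tendsto_atBot_of_abs_sub_le (hC : ∀ θ, |g θ - θ| ≤ C) : Tendsto g atBot atBot :=
  tendsto_atBot_mono (fun θ => by rw [id]; linarith [(abs_le.1 (hC θ)).2])
    (tendsto_atBot_add_const_right _ C tendsto_id)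

theorem surjective_of_abs_sub_le (hg : Continuous g) (hC : ∀ θ, |g θ - θ| ≤ C) : g.Surjective :=
  hg.surjective (tendsto_atTop_of_abs_sub_le hC) (tendsto_atBot_of_abs_sub_le hC)

theorem strictMono_of_abs_sub_le (hg : Continuous g) (hinj : g.Injective)
    (hC : ∀ θ, |g θ - θ| ≤ C) : StrictMono g := by
  refine (hg.strictMono_of_inj hinj).resolve_right fun hanti => ?_
  obtain ⟨θ, hgθ, hθ⟩ := ((tendsto_atTop_of_abs_sub_le hC).eventually_gt_atTop (g 0)).and
    (eventually_gt_atTop 0) |>.exists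
  exact lt_asymm hgθ (hanti hθ)

end BoundedDisplacement

theorem lt_of_deriv_neg_of_deriv_pos {f f' : ℝ → ℝ} {x₀ : ℝ}
    (hf : ∀ x, HasDerivAt f (f' x) x) (hneg : ∀ x < x₀, f' x < 0) (hpos : ∀ x, x₀ < x → 0 < f' x)
    {x : ℝ} (hx : x ≠ x₀) : f x₀ < f x := by
  have hcont : ContinuousOn f univ := fun x _ => (hf x).continuousAt.continuousWithinAt
  rcases hx.lt_or_gt with hlt | hgt
  · refine strictAntiOn_of_deriv_neg (convex_Iic x₀) (hcont.mono (subset_univ _)) (fun y hy => ?_)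
      (mem_Iic.2 hlt.le) self_mem_Iic hlt
    rw [(hf y).deriv]
    exact hneg y (by simpa using hy)
  · refine strictMonoOn_of_deriv_pos (convex_Ici x₀) (hcont.mono (subset_univ _)) (fun y hy => ?_)
      self_mem_Ici (mem_Ici.2 hgt.le) hgt
    rw [(hf y).deriv]
    exact hpos y (by simpa using hy)

theorem add_quadratic_le_of_deriv_ge {f f' : ℝ → ℝ} {a M : ℝ}
    (hf : ∀ x, HasDerivAt f (f' x) x) (hf' : ∀ x, 0 ≤ x → a * x - M ≤ f' x)
    {x : ℝ} (hx : 0 ≤ x) : f 0 + a / 2 * x ^ 2 - M * x ≤ f x := by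
  have hq : ∀ y, HasDerivAt (fun y => f y - (a / 2 * y ^ 2 - M * y)) (f' y - (a * y - M)) y :=
    fun y => ((hf y).sub (((hasDerivAt_pow 2 y).const_mul (a / 2)).sub
      ((hasDerivAt_id y).const_mul M))).congr_deriv
        (by simp only [Nat.cast_ofNat, Nat.add_one_sub_one, pow_one, mul_one]; ring)
  have hmono := monotoneOn_of_deriv_nonneg (convex_Ici 0)
    (fun y _ => (hq y).continuousAt.continuousWithinAt)
    (fun y _ => (hq y).differentiableAt.differentiableWithinAt)
    (fun y hy => by
      rw [(hq y).deriv]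
      linarith [hf' y (interior_subset hy : y ∈ Ici 0)])
    self_mem_Ici (mem_Ici.2 hx) hx
  simp only at hmono
  linarith

theorem hasDerivAt_apply_argmin {W D : ℝ → ℝ → ℝ} {g : ℝ → ℝ} {θ : ℝ}
    (hmin : ∀ t Θ, W t (g t) ≤ W t Θ) (hW : ∀ t Θ, HasDerivAt (fun s => W s Θ) (D t Θ) t)
    (hD : ContinuousAt (fun p : ℝ × ℝ => D p.1 p.2) (θ, g θ)) (hg : ContinuousAt g θ)
    (hcrit : D θ (g θ) = 0) : HasDerivAt (fun t => W t (g t)) 0 θ := by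
  rw [hasDerivAt_iff_isLittleO, Asymptotics.isLittleO_iff]
  intro c hc
  obtain ⟨δ, hδ, hsmall⟩ := Metric.eventually_nhds_iff_ball.1
    (hD.norm.eventually (gt_mem_nhds (by simpa [hcrit] using hc)))
  have hlip : ∀ Θ ∈ Metric.ball (g θ) δ, ∀ t ∈ Metric.ball θ δ,
      ‖W t Θ - W θ Θ‖ ≤ c * ‖t - θ‖ := fun Θ hΘ t ht =>
    (convex_ball θ δ).norm_image_sub_le_of_norm_hasDerivWithin_le
      (fun s _ => (hW s Θ).hasDerivWithinAt)
      (fun s hs => (hsmall (s, Θ) (by rw [Metric.mem_ball, Prod.dist_eq]; exact max_lt hs hΘ)).le)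
      (Metric.mem_ball_self hδ) ht
  filter_upwards [Metric.ball_mem_nhds θ hδ, hg (Metric.ball_mem_nhds (g θ) hδ)] with t ht hgt
  have h₁ := hlip (g θ) (Metric.mem_ball_self hδ) t ht
  have h₂ := hlip (g t) hgt t ht
  simp only [smul_zero, sub_zero, Real.norm_eq_abs] at h₁ h₂ ⊢
  rw [abs_le]
  constructor <;> linarith [abs_le.1 h₁, abs_le.1 h₂, hmin t (g θ), hmin θ (g t)]

theorem apply_argmin_eq {W D : ℝ → ℝ → ℝ} {g : ℝ → ℝ}
    (hmin : ∀ t Θ, W t (g t) ≤ W t Θ) (hW : ∀ t Θ, HasDerivAt (fun s => W s Θ) (D t Θ) t)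
    (hD : Continuous fun p : ℝ × ℝ => D p.1 p.2) (hg : Continuous g)
    (hcrit : ∀ t, D t (g t) = 0) (θ θ' : ℝ) : W θ (g θ) = W θ' (g θ') := by
  have hderiv := fun t => hasDerivAt_apply_argmin hmin hW hD.continuousAt hg.continuousAt (hcrit t)
  exact is_const_of_deriv_eq_zero (fun t => (hderiv t).differentiableAt) (fun t => (hderiv t).deriv)
    θ θ'

theorem _root_.Finset.sum_Ico_sub_int {M : Type*} [AddCommGroup M] (f : ℤ → M) {a b : ℤ}
    (hab : a ≤ b) :
    ∑ j ∈ Finset.Ico a b, (f (j + 1) - f j) = f b - f a := by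
  induction b, hab using Int.leInduction with
  | base => simp
  | succ n hn ih =>
    rw [← Finset.insert_Ico_right_eq_Ico_add_one hn, Finset.sum_insert (by simp), ih]
    abel

theorem sum_Ico_le_of_cohomologous {L W : ℝ → ℝ → ℝ} {P : ℝ → ℝ} {m : ℝ}
    (hLW : ∀ x y, L x y = W x y + (P y - P x)) (hm : ∀ x y, m ≤ W x y)
    {x y : ℤ → ℝ} (hx : ∀ k, W (x k) (x (k + 1)) = m) {a b : ℤ} (hab : a ≤ b)
    (ha : y a = x a) (hb : y b = x b) :
    ∑ j ∈ Finset.Ico a b, L (x j) (x (j + 1)) ≤ ∑ j ∈ Finset.Ico a b, L (y j) (y (j + 1)) := by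
  have hsum : ∀ z : ℤ → ℝ, ∑ j ∈ Finset.Ico a b, L (z j) (z (j + 1)) =
      ∑ j ∈ Finset.Ico a b, W (z j) (z (j + 1)) + (P (z b) - P (z a)) := fun z => by
    simp only [hLW, Finset.sum_add_distrib, Finset.sum_Ico_sub_int (fun j => P (z j)) hab]
  rw [hsum x, hsum y, ha, hb]
  gcongr with j
  rw [hx]
  exact hm _ _

noncomputable def partialFst (S : ℝ × ℝ → ℝ) (θ Θ : ℝ) : ℝ := deriv (fun t => S (t, Θ)) θ

noncomputable def partialSnd (S : ℝ × ℝ → ℝ) (θ Θ : ℝ) : ℝ := deriv (fun u => S (θ, u)) Θ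

variable {S : ℝ × ℝ → ℝ} {ψ g : ℝ → ℝ} {ε : ℝ}

theorem partialFst_eq_fderiv (hS : Differentiable ℝ S) (θ Θ : ℝ) :
    partialFst S θ Θ = fderiv ℝ S (θ, Θ) (1, 0) :=
  (hS _).hasFDerivAt.hasDerivAt_slice_fst.deriv

theorem partialSnd_eq_fderiv (hS : Differentiable ℝ S) (θ Θ : ℝ) :
    partialSnd S θ Θ = fderiv ℝ S (θ, Θ) (0, 1) :=
  (hS _).hasFDerivAt.hasDerivAt_slice_snd.deriv

theorem hasDerivAt_partialFst (hS : Differentiable ℝ S) (θ Θ : ℝ) :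
    HasDerivAt (fun t => S (t, Θ)) (partialFst S θ Θ) θ := by
  rw [partialFst_eq_fderiv hS]
  exact (hS _).hasFDerivAt.hasDerivAt_slice_fst

theorem hasDerivAt_partialSnd (hS : Differentiable ℝ S) (θ Θ : ℝ) :
    HasDerivAt (fun u => S (θ, u)) (partialSnd S θ Θ) Θ := by
  rw [partialSnd_eq_fderiv hS]
  exact (hS _).hasFDerivAt.hasDerivAt_slice_snd

theorem continuous_partialFst (hS : ContDiff ℝ 1 S) :
    Continuous fun p : ℝ × ℝ => partialFst S p.1 p.2 := by
  simp_rw [partialFst_eq_fderiv (hS.differentiable one_ne_zero)]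
  exact (hS.continuous_fderiv one_ne_zero).clm_apply continuous_const

theorem continuous_partialSnd (hS : ContDiff ℝ 1 S) :
    Continuous fun p : ℝ × ℝ => partialSnd S p.1 p.2 := by
  simp_rw [partialSnd_eq_fderiv (hS.differentiable one_ne_zero)]
  exact (hS.continuous_fderiv one_ne_zero).clm_apply continuous_const

theorem hasFDerivAt_fderiv (hS : ContDiff ℝ 2 S) (p : ℝ × ℝ) :
    HasFDerivAt (fderiv ℝ S) (fderiv ℝ (fderiv ℝ S) p) p :=
  ((hS.fderiv_right (m := 1) le_rfl).differentiable one_ne_zero p).hasFDerivAt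

theorem hasDerivAt_partialFst_snd (hS : ContDiff ℝ 2 S) (θ Θ : ℝ) :
    HasDerivAt (fun u => partialFst S θ u) (fderiv ℝ (fderiv ℝ S) (θ, Θ) (0, 1) (1, 0)) Θ := by
  simp_rw [partialFst_eq_fderiv (hS.differentiable two_ne_zero)]
  simpa using (hasFDerivAt_fderiv hS (θ, Θ)).hasDerivAt_slice_snd.clm_apply
    (hasDerivAt_const Θ ((1 : ℝ), (0 : ℝ)))

theorem hasDerivAt_partialSnd_fst (hS : ContDiff ℝ 2 S) (θ Θ : ℝ) :
    HasDerivAt (fun t => partialSnd S t Θ) (fderiv ℝ (fderiv ℝ S) (θ, Θ) (1, 0) (0, 1)) θ := by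
  simp_rw [partialSnd_eq_fderiv (hS.differentiable two_ne_zero)]
  simpa using (hasFDerivAt_fderiv hS (θ, Θ)).hasDerivAt_slice_fst.clm_apply
    (hasDerivAt_const θ ((0 : ℝ), (1 : ℝ)))

theorem deriv_partialFst_snd (hS : ContDiff ℝ 2 S) (θ Θ : ℝ) :
    deriv (fun u => partialFst S θ u) Θ = deriv (fun t => partialSnd S t Θ) θ := by
  rw [(hasDerivAt_partialFst_snd hS θ Θ).deriv, (hasDerivAt_partialSnd_fst hS θ Θ).deriv]
  exact hS.contDiffAt.isSymmSndFDerivAt (by simp) _ _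

theorem partialSnd_sub_le (hS : ContDiff ℝ 2 S)
    (hmix : ∀ θ Θ, deriv (fun t => partialSnd S t Θ) θ ≤ -ε) (Θ : ℝ) {a b : ℝ} (hab : a ≤ b) :
    partialSnd S b Θ - partialSnd S a Θ ≤ -ε * (b - a) :=
  image_sub_le_mul_sub_of_deriv_le (fun t => (hasDerivAt_partialSnd_fst hS t Θ).differentiableAt)
    (fun t => hmix t Θ) hab

theorem partialFst_sub_le (hS : ContDiff ℝ 2 S)
    (hmix : ∀ θ Θ, deriv (fun t => partialSnd S t Θ) θ ≤ -ε) (θ : ℝ) {a b : ℝ} (hab : a ≤ b) :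
    partialFst S θ b - partialFst S θ a ≤ -ε * (b - a) :=
  image_sub_le_mul_sub_of_deriv_le (fun u => (hasDerivAt_partialFst_snd hS θ u).differentiableAt)
    (fun u => (deriv_partialFst_snd hS θ u).trans_le (hmix θ u)) hab

theorem partialFst_add_one (hper : ∀ θ Θ : ℝ, S (θ + 1, Θ + 1) = S (θ, Θ)) (θ Θ : ℝ) :
    partialFst S (θ + 1) (Θ + 1) = partialFst S θ Θ := by
  simp only [partialFst, ← deriv_comp_add_const, hper]

theorem partialSnd_add_one (hper : ∀ θ Θ : ℝ, S (θ + 1, Θ + 1) = S (θ, Θ)) (θ Θ : ℝ) :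
    partialSnd S (θ + 1) (Θ + 1) = partialSnd S θ Θ := by
  simp only [partialSnd, ← deriv_comp_add_const, hper]

theorem hasDerivAt_etaFn (hψ : Continuous ψ) (θ : ℝ) :
    HasDerivAt (etaFn ψ) (ψ θ - cconst ψ) θ :=
  (hψ.integral_hasStrictDerivAt 0 θ).hasDerivAt.sub
    ((hasDerivAt_id θ).const_mul (cconst ψ) |>.congr_deriv (mul_one _))

theorem etaFn_add_one (hψ : Continuous ψ) (hψper : ∀ θ, ψ (θ + 1) = ψ θ) (θ : ℝ) :
    etaFn ψ (θ + 1) = etaFn ψ θ := by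
  have hshift : ∫ t in θ..θ + 1, ψ t = cconst ψ := by
    simpa [cconst] using Function.Periodic.intervalIntegral_add_eq hψper θ 0
  rw [etaFn, etaFn, ← intervalIntegral.integral_add_adjacent_intervals (hψ.intervalIntegrable _ _)
    (hψ.intervalIntegrable _ _), hshift]
  ring

theorem WFn_add_one (hper : ∀ θ Θ : ℝ, S (θ + 1, Θ + 1) = S (θ, Θ)) (hψ : Continuous ψ)
    (hψper : ∀ θ, ψ (θ + 1) = ψ θ) (θ Θ : ℝ) : WFn S ψ (θ + 1) (Θ + 1) = WFn S ψ θ Θ := by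
  simp only [WFn, hper, etaFn_add_one hψ hψper]
  ring

theorem hasDerivAt_WFn_fst (hS : Differentiable ℝ S) (hψ : Continuous ψ) (θ Θ : ℝ) :
    HasDerivAt (fun t => WFn S ψ t Θ) (partialFst S θ Θ + ψ θ) θ :=
  (((hasDerivAt_partialFst hS θ Θ).add (((hasDerivAt_id θ).sub_const Θ).const_mul (cconst ψ))).add
    (hasDerivAt_etaFn hψ θ) |>.sub_const (etaFn ψ Θ)).congr_deriv (by simp)

theorem hasDerivAt_WFn_snd (hS : Differentiable ℝ S) (hψ : Continuous ψ) (θ Θ : ℝ) :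
    HasDerivAt (fun u => WFn S ψ θ u) (partialSnd S θ Θ - ψ Θ) Θ :=
  ((((hasDerivAt_partialSnd hS θ Θ).add
    (((hasDerivAt_id Θ).const_sub θ).const_mul (cconst ψ))).add_const (etaFn ψ θ)).sub
      (hasDerivAt_etaFn hψ Θ)).congr_deriv (by ring)

theorem WFn_ge_quadratic (hS : ContDiff ℝ 2 S)
    (hmix : ∀ θ Θ, deriv (fun t => partialSnd S t Θ) θ ≤ -ε) (hψ : Continuous ψ) {M : ℝ}
    (hM : ∀ s, |partialSnd S s s| + |ψ s| ≤ M) (θ Θ : ℝ) :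
    S (θ, θ) + ε / 2 * |Θ - θ| ^ 2 - M * |Θ - θ| ≤ WFn S ψ θ Θ := by
  have hS₁ : Differentiable ℝ S := hS.differentiable two_ne_zero
  have hWθ : WFn S ψ θ θ = S (θ, θ) := by simp [WFn]
  rcases le_total θ Θ with h | h
  · have := add_quadratic_le_of_deriv_ge (a := ε) (M := M)
      (fun d => (hasDerivAt_WFn_snd hS₁ hψ θ (θ + d)).comp_const_add θ d)
      (fun d hd => by
        have := partialSnd_sub_le hS hmix (θ + d) (a := θ) (le_add_of_nonneg_right hd)
        linarith [hM (θ + d), neg_abs_le (partialSnd S (θ + d) (θ + d)), le_abs_self (ψ (θ + d))])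
      (sub_nonneg.2 h)
    simpa [abs_of_nonneg (sub_nonneg.2 h), hWθ] using this
  · have := add_quadratic_le_of_deriv_ge (a := ε) (M := M)
      (fun d => (hasDerivAt_WFn_snd hS₁ hψ θ (θ - d)).comp_const_sub θ d)
      (fun d hd => by
        have := partialSnd_sub_le hS hmix (θ - d) (b := θ) (sub_le_self θ hd)
        linarith [hM (θ - d), le_abs_self (partialSnd S (θ - d) (θ - d)), neg_abs_le (ψ (θ - d))])
      (sub_nonneg.2 h)
    simpa [abs_of_nonpos (sub_nonpos.2 h), hWθ] using this

theorem WFn_coercive (hS : ContDiff ℝ 2 S) (hε : 0 < ε)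
    (hmix : ∀ θ Θ, deriv (fun t => partialSnd S t Θ) θ ≤ -ε)
    (hper : ∀ θ Θ : ℝ, S (θ + 1, Θ + 1) = S (θ, Θ)) (hψ : Continuous ψ)
    (hψper : ∀ θ, ψ (θ + 1) = ψ θ) (A : ℝ) :
    ∃ R, ∀ θ Θ, R ≤ |Θ - θ| → A ≤ WFn S ψ θ Θ := by
  have hdiag : Continuous fun s : ℝ => (s, s) := continuous_id.prodMk continuous_id
  obtain ⟨M, hM⟩ := exists_abs_le_of_periodic
    (f := fun s => |partialSnd S s s| + |ψ s|)
    (((continuous_partialSnd (hS.of_le one_le_two)).comp hdiag).abs.add hψ.abs)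
    (fun s => by simp only [partialSnd_add_one hper, hψper])
  obtain ⟨K, hK⟩ := exists_abs_le_of_periodic (hS.continuous.comp hdiag) (fun s => hper s s)
  refine ⟨1 + 2 * (|M| + |K| + |A|) / ε, fun θ Θ hR => ?_⟩
  have hd : 1 ≤ |Θ - θ| := le_trans (by simp only [le_add_iff_nonneg_right]; positivity) hR
  have hq : 2 * (|M| + |K| + |A|) / ε ≤ |Θ - θ| - 1 := by linarith
  rw [div_le_iff₀' hε] at hq
  have hW := WFn_ge_quadratic hS hmix hψ (fun s => (le_abs_self _).trans (hM s)) θ Θ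
  have hSθ := (abs_le.1 (hK θ)).1
  simp only [Function.comp_apply] at hSθ
  nlinarith [mul_nonneg (abs_nonneg (Θ - θ))
      (by linarith : (0 : ℝ) ≤ ε / 2 * |Θ - θ| - |M| - |K| - |A|),
    mul_nonneg (sub_nonneg.2 hd) (by positivity : (0 : ℝ) ≤ |K| + |A|),
    mul_le_mul_of_nonneg_right (le_abs_self M) (abs_nonneg (Θ - θ)), le_abs_self A, le_abs_self K]

theorem strictAnti_partialFst (hS : ContDiff ℝ 2 S) (hε : 0 < ε)
    (hmix : ∀ θ Θ, deriv (fun t => partialSnd S t Θ) θ ≤ -ε) (θ : ℝ) :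
    StrictAnti (partialFst S θ) :=
  strictAnti_of_sub_le hε fun _ _ => partialFst_sub_le hS hmix θ

theorem strictAnti_partialSnd (hS : ContDiff ℝ 2 S) (hε : 0 < ε)
    (hmix : ∀ θ Θ, deriv (fun t => partialSnd S t Θ) θ ≤ -ε) (Θ : ℝ) :
    StrictAnti fun t => partialSnd S t Θ :=
  strictAnti_of_sub_le hε fun _ _ => partialSnd_sub_le hS hmix Θ

theorem continuous_of_partialFst_eq (hS : ContDiff ℝ 2 S) (hε : 0 < ε)
    (hmix : ∀ θ Θ, deriv (fun t => partialSnd S t Θ) θ ≤ -ε) (hψ : Continuous ψ)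
    (hg : ∀ θ, partialFst S θ (g θ) = -ψ θ) : Continuous g :=
  continuous_of_strictAnti_of_apply_eq (strictAnti_partialFst hS hε hmix)
    (fun _ => (continuous_partialFst (hS.of_le one_le_two)).comp
      (continuous_id.prodMk continuous_const)) hψ.neg hg

theorem exists_abs_sub_le_of_partialFst_eq (hS : ContDiff ℝ 2 S) (hε : 0 < ε)
    (hmix : ∀ θ Θ, deriv (fun t => partialSnd S t Θ) θ ≤ -ε)
    (hper : ∀ θ Θ : ℝ, S (θ + 1, Θ + 1) = S (θ, Θ)) (hψ : Continuous ψ)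
    (hψper : ∀ θ, ψ (θ + 1) = ψ θ) (hg : ∀ θ, partialFst S θ (g θ) = -ψ θ) :
    ∃ C, ∀ θ, |g θ - θ| ≤ C := by
  obtain ⟨M, hM⟩ := exists_abs_le_of_periodic (f := fun t => ψ t + partialFst S t t)
    (hψ.add ((continuous_partialFst (hS.of_le one_le_two)).comp
      (continuous_id.prodMk continuous_id)))
    (fun t => by simp only [hψper, partialFst_add_one hper])
  refine ⟨M / ε, fun θ => ?_⟩
  rw [le_div_iff₀' hε]
  calc ε * |g θ - θ| ≤ |partialFst S θ (g θ) - partialFst S θ θ| :=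
        mul_abs_sub_le_of_sub_le (fun _ _ => partialFst_sub_le hS hmix θ) _ _
    _ = |ψ θ + partialFst S θ θ| := by rw [hg, ← abs_neg]; ring_nf
    _ ≤ M := hM θ

theorem injective_of_partialSnd_eq (hS : ContDiff ℝ 2 S) (hε : 0 < ε)
    (hmix : ∀ θ Θ, deriv (fun t => partialSnd S t Θ) θ ≤ -ε)
    (hg : ∀ θ, partialSnd S θ (g θ) = ψ (g θ)) : g.Injective := fun a b hab =>
  (strictAnti_partialSnd hS hε hmix (g a)).injective (by rw [hg a, hab, hg b])

theorem WFn_lt_of_ne (hS : ContDiff ℝ 2 S) (hε : 0 < ε)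
    (hmix : ∀ θ Θ, deriv (fun t => partialSnd S t Θ) θ ≤ -ε) (hψ : Continuous ψ)
    (hg : ∀ θ, partialSnd S θ (g θ) = ψ (g θ)) (hg_mono : StrictMono g)
    (hg_surj : g.Surjective) {θ Θ : ℝ} (hΘ : Θ ≠ g θ) : WFn S ψ θ (g θ) < WFn S ψ θ Θ := by
  refine lt_of_deriv_neg_of_deriv_pos (hasDerivAt_WFn_snd (hS.differentiable two_ne_zero) hψ θ)
    (fun u hu => ?_) (fun u hu => ?_) hΘ
  all_goals
    obtain ⟨t, rfl⟩ := hg_surj u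
    rw [← hg t]
  · exact sub_neg.2 (strictAnti_partialSnd hS hε hmix (g t) (hg_mono.lt_iff_lt.1 hu))
  · exact sub_pos.2 (strictAnti_partialSnd hS hε hmix (g t) (hg_mono.lt_iff_lt.1 hu))

theorem WFn_apply_eq (hS : ContDiff ℝ 1 S) (hψ : Continuous ψ)
    (hg : ∀ θ, partialFst S θ (g θ) = -ψ θ) (hg_cont : Continuous g)
    (hmin : ∀ θ Θ, WFn S ψ θ (g θ) ≤ WFn S ψ θ Θ) (θ θ' : ℝ) :
    WFn S ψ θ (g θ) = WFn S ψ θ' (g θ') :=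
  apply_argmin_eq hmin (hasDerivAt_WFn_fst (hS.differentiable one_ne_zero) hψ)
    ((continuous_partialFst hS).add (hψ.comp continuous_fst)) hg_cont
    (fun t => by rw [hg]; ring) θ θ'

theorem deriv_WFn_eq_zero_iff (hS : ContDiff ℝ 2 S) (hε : 0 < ε)
    (hmix : ∀ θ Θ, deriv (fun t => partialSnd S t Θ) θ ≤ -ε) (hψ : Continuous ψ)
    (hg₁ : ∀ θ, partialFst S θ (g θ) = -ψ θ) (hg₂ : ∀ θ, partialSnd S θ (g θ) = ψ (g θ))
    (θ Θ : ℝ) :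
    (deriv (fun t => WFn S ψ t Θ) θ = 0 ∧ deriv (fun u => WFn S ψ θ u) Θ = 0) ↔ Θ = g θ := by
  have hS₁ : Differentiable ℝ S := hS.differentiable two_ne_zero
  rw [(hasDerivAt_WFn_fst hS₁ hψ θ Θ).deriv, (hasDerivAt_WFn_snd hS₁ hψ θ Θ).deriv]
  constructor
  · rintro ⟨h, -⟩
    exact (strictAnti_partialFst hS hε hmix θ).injective (by rw [hg₁]; linarith)
  · rintro rfl
    exact ⟨by rw [hg₁]; ring, by rw [hg₂]; ring⟩

end TwistMap

open TwistMap

/-- Mather: if the graph of a continuous `ψ` is invariant by a conservative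
twist map with lift `F` and generating function `S`, then the modified
generating function `W` is periodic and coercive, its critical points are
exactly the pairs `(θ, π∘F(θ,ψ(θ)))`, its global minimum is attained precisely
there, and consequently every orbit on the graph of `ψ` is minimizing. -/
theorem stmt19 (S : ℝ × ℝ → ℝ) (ε : ℝ) (hε : 0 < ε) (hS : ContDiff ℝ 2 S)
    (hper : ∀ θ Θ : ℝ, S (θ + 1, Θ + 1) = S (θ, Θ))
    (hmix : ∀ θ Θ : ℝ, deriv (fun t => deriv (fun u => S (t, u)) Θ) θ ≤ -ε)
    (F : ℝ × ℝ → ℝ × ℝ)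
    (hF : ∀ θ r Θ R : ℝ, F (θ, r) = (Θ, R) ↔
      (R = deriv (fun u => S (θ, u)) Θ ∧ r = -(deriv (fun t => S (t, Θ)) θ)))
    (ψ : ℝ → ℝ) (hψc : Continuous ψ) (hψper : ∀ θ, ψ (θ + 1) = ψ θ)
    (hgraph : ∀ θ : ℝ, F (θ, ψ θ) = ((F (θ, ψ θ)).1, ψ ((F (θ, ψ θ)).1))) :
    (∀ θ Θ : ℝ, WFn S ψ (θ + 1) (Θ + 1) = WFn S ψ θ Θ) ∧
    (∀ A : ℝ, ∃ R : ℝ, ∀ θ Θ : ℝ, R ≤ |Θ - θ| → A ≤ WFn S ψ θ Θ) ∧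
    (∀ θ Θ : ℝ,
      (deriv (fun t => WFn S ψ t Θ) θ = 0 ∧ deriv (fun u => WFn S ψ θ u) Θ = 0) ↔
      Θ = (F (θ, ψ θ)).1) ∧
    (∃ mW : ℝ, (∀ θ Θ : ℝ, mW ≤ WFn S ψ θ Θ) ∧
      ∀ θ Θ : ℝ, (WFn S ψ θ Θ = mW ↔ Θ = (F (θ, ψ θ)).1)) ∧
    (∀ x : ℤ → ℝ, (∀ k : ℤ, x (k + 1) = (F (x k, ψ (x k))).1) →
      ∀ a b : ℤ, a ≤ b → ∀ y : ℤ → ℝ, y a = x a → y b = x b →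
        (∑ j ∈ Finset.Ico a b, S (x j, x (j + 1))) ≤
        (∑ j ∈ Finset.Ico a b, S (y j, y (j + 1)))) := by
  set g : ℝ → ℝ := fun θ => (F (θ, ψ θ)).1
  have hinv θ : ψ (g θ) = partialSnd S θ (g θ) ∧ ψ θ = -partialFst S θ (g θ) :=
    (hF θ (ψ θ) (g θ) (ψ (g θ))).1 (hgraph θ)
  have hg₁ θ : partialFst S θ (g θ) = -ψ θ := by rw [(hinv θ).2, neg_neg]
  have hg₂ θ : partialSnd S θ (g θ) = ψ (g θ) := (hinv θ).1.symm
  have hg_cont := continuous_of_partialFst_eq hS hε hmix hψc hg₁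
  obtain ⟨C, hC⟩ := exists_abs_sub_le_of_partialFst_eq hS hε hmix hper hψc hψper hg₁
  have hg_mono := strictMono_of_abs_sub_le hg_cont (injective_of_partialSnd_eq hS hε hmix hg₂) hC
  have hlt : ∀ {θ Θ}, Θ ≠ g θ → WFn S ψ θ (g θ) < WFn S ψ θ Θ :=
    WFn_lt_of_ne hS hε hmix hψc hg₂ hg_mono (surjective_of_abs_sub_le hg_cont hC)
  have hmin θ Θ : WFn S ψ θ (g θ) ≤ WFn S ψ θ Θ := by
    rcases eq_or_ne Θ (g θ) with rfl | hΘ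
    exacts [le_rfl, (hlt hΘ).le]
  have hconst := WFn_apply_eq (hS.of_le one_le_two) hψc hg₁ hg_cont hmin
  refine ⟨WFn_add_one hper hψc hψper, WFn_coercive hS hε hmix hper hψc hψper,
    deriv_WFn_eq_zero_iff hS hε hmix hψc hg₁ hg₂, ⟨WFn S ψ 0 (g 0),
      fun θ Θ => (hconst 0 θ).trans_le (hmin θ Θ), fun θ Θ => ⟨fun h => ?_, ?_⟩⟩, ?_⟩
  · by_contra hΘ
    exact (hlt hΘ).ne' (h.trans (hconst 0 θ))
  · rintro rfl
    exact hconst θ 0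
  · intro x hx a b hab y ha hb
    exact sum_Ico_le_of_cohomologous (L := fun x y => S (x, y)) (W := WFn S ψ)
      (P := fun x => cconst ψ * x + etaFn ψ x) (fun x y => by simp only [WFn]; ring)
      (fun x y => (hconst 0 x).trans_le (hmin x y)) (fun k => by rw [hx k]; exact hconst _ 0)
      hab ha hb
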